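/- arXiv:2107.12628 — 4 statements merged into one kernel-verified Lean document; each statement's English description precedes it below -/
import Mathlib

section
/- Fix θ̄ ∈ ℝ. Assume: (i) for every x ∈ X and every i : Fin (K+1), the map θ ↦ h θ x i has derivative h'(x,i) at θ̄; write S'(x) := ∑_{i : Fin K} h'(x, i.castSucc) and u'(x) := h'(x, Fin.last K); (ii) x ↦ S θ̄ x and x ↦ u θ̄ x are integrable with Z' := ∫ S θ̄ x dμ > 0 and Z := ∫ u θ̄ x dμ > 0; (iii) x ↦ S'(x) is integrable; (iv) differentiation under the integral sign is valid for both objectives, i.e. the map θ ↦ ∫ (S θ̄ x / Z') · log(S θ x) dμ has derivative at θ̄ equal to ∫ (S θ̄ x / Z') · (S'(x) / S θ̄ x) dμ, and the map θ ↦ ∫ (u θ̄ x / Z) · (− log(u θ x)) dμ has derivative at θ̄ equal to ∫ (u θ̄ x / Z) · (− u'(x) / u θ̄ x) dμ. Then the derivative at θ̄ of θ ↦ ∫ (S θ̄ x / Z') · log(S θ x) dμ equals (Z / Z') times the derivative at θ̄ of θ ↦ ∫ (u θ̄ x / Z) · (− log(u θ x)) dμ. (In particular, since Z/Z' > 0,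 the two gradients are positive scalar multiples of each other.) -/
open MeasureTheory

/-! Differentiating `∑ᵢ h θ x i = 1` gives `S' = -u'` pointwise. In each objective the frozen
weight cancels against the score denominator, so the two gradients are `(∫ S') / Z'` and
`(∫ -u') / Z`, i.e. the same integral divided by different normalizers. -/

theorem sum_eq_zero_of_hasDerivAt_of_sum_const {ι : Type*} [Fintype ι] {f : ℝ → ι → ℝ}
    {f' : ι → ℝ} {c θ₀ : ℝ} (hconst : ∀ θ, ∑ i, f θ i = c)
    (hf : ∀ i, HasDerivAt (fun θ => f θ i) (f' i) θ₀) :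
    ∑ i, f' i = 0 := by
  have hsum : HasDerivAt (fun θ => ∑ i, f θ i) (∑ i, f' i) θ₀ :=
    HasDerivAt.fun_sum fun i _ => hf i
  simp only [hconst] at hsum
  exact hsum.unique (hasDerivAt_const θ₀ c)

theorem Fin.sum_castSucc_eq_neg_last_of_sum_eq_zero {M : Type*} [AddCommGroup M] {K : ℕ}
    {f : Fin (K + 1) → M} (hf : ∑ i, f i = 0) :
    ∑ i : Fin K, f i.castSucc = -f (Fin.last K) := by
  rw [Fin.sum_univ_castSucc] at hf
  exact eq_neg_of_add_eq_zero_left hf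

theorem integral_div_mul_div_cancel {X : Type*} [MeasurableSpace X] {μ : Measure X}
    {w g : X → ℝ} (c : ℝ) (hw : ∀ x, w x ≠ 0) :
    ∫ x, w x / c * (g x / w x) ∂μ = (∫ x, g x ∂μ) / c := by
  rw [← integral_div]
  congr 1 with x
  field_simp [hw x]

theorem eow_softmax_frozen_gradient_proportionality_general
    {X : Type*} [MeasurableSpace X] (μ : Measure X)
    (K : ℕ) (hK : 1 ≤ K)
    (h : ℝ → X → Fin (K + 1) → ℝ)
    (hpos : ∀ θ x i, 0 < h θ x i)
    (hsum1 : ∀ θ x, ∑ i : Fin (K + 1), h θ x i = 1)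
    (S u : ℝ → X → ℝ)
    (hS : ∀ θ x, S θ x = ∑ i : Fin K, h θ x i.castSucc)
    (hu : ∀ θ x, u θ x = h θ x (Fin.last K))
    (θbar : ℝ) (h' : X → Fin (K + 1) → ℝ)
    -- (i) pointwise derivatives at θ̄
    (hderiv : ∀ x i, HasDerivAt (fun θ => h θ x i) (h' x i) θbar)
    (S' u' : X → ℝ)
    (hS' : ∀ x, S' x = ∑ i : Fin K, h' x i.castSucc)
    (hu' : ∀ x, u' x = h' x (Fin.last K))
    -- (ii) integrability and positive normalizers at θ̄
    (Z' Z : ℝ)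
    (hZpos : 0 < Z)
    -- (iv) differentiation under the integral sign for both objectives
    (hd1 : HasDerivAt (fun θ => ∫ x, (S θbar x / Z') * Real.log (S θ x) ∂μ)
      (∫ x, (S θbar x / Z') * (S' x / S θbar x) ∂μ) θbar)
    (hd2 : HasDerivAt (fun θ => ∫ x, (u θbar x / Z) * (-Real.log (u θ x)) ∂μ)
      (∫ x, (u θbar x / Z) * (-u' x / u θbar x) ∂μ) θbar) :
    deriv (fun θ => ∫ x, (S θbar x / Z') * Real.log (S θ x) ∂μ) θbar =
      (Z / Z') *
        deriv (fun θ => ∫ x, (u θbar x / Z) * (-Real.log (u θ x)) ∂μ) θbar := by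
  have hS'_eq : S' = fun x => -u' x := funext fun x => by
    rw [hS', hu']
    exact Fin.sum_castSucc_eq_neg_last_of_sum_eq_zero
      (sum_eq_zero_of_hasDerivAt_of_sum_const (hsum1 · x) (hderiv x))
  have hS_ne : ∀ x, S θbar x ≠ 0 := fun x => by
    rw [hS]
    exact (Finset.sum_pos (fun i _ => hpos _ _ _) ⟨⟨0, hK⟩, Finset.mem_univ _⟩).ne'
  have hu_ne : ∀ x, u θbar x ≠ 0 := fun x => by
    rw [hu]
    exact (hpos _ _ _).ne'
  rw [hd1.deriv, hd2.deriv, integral_div_mul_div_cancel Z' hS_ne,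
    integral_div_mul_div_cancel Z hu_ne, hS'_eq]
  field_simp

/-- Proposition 1 of the paper: for a parametrized softmax family
`h : ℝ → X → Fin (K+1) → ℝ` (positive coordinates summing to one), with
`S θ x = ∑_{i : Fin K} h θ x i.castSucc`, `u θ x = h θ x (Fin.last K)`,
pointwise derivatives `h'` at `θ̄` (so `S' x = ∑_{i : Fin K} h' x i.castSucc`,
`u' x = h' x (Fin.last K)`), normalizers `Z' = ∫ S θ̄ x dμ > 0` and
`Z = ∫ u θ̄ x dμ > 0`, and validity of differentiation under the integral sign
for both objectives, the derivative at `θ̄` of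
`θ ↦ ∫ (S θ̄ x / Z') * log (S θ x) dμ` equals `Z / Z'` times the derivative at `θ̄`
of `θ ↦ ∫ (u θ̄ x / Z) * (-log (u θ x)) dμ`. -/
theorem eow_softmax_frozen_gradient_proportionality
    {X : Type*} [MeasurableSpace X] (μ : Measure X) [SigmaFinite μ]
    (K : ℕ) (hK : 1 ≤ K)
    (h : ℝ → X → Fin (K + 1) → ℝ)
    (hpos : ∀ θ x i, 0 < h θ x i)
    (hsum1 : ∀ θ x, ∑ i : Fin (K + 1), h θ x i = 1)
    (S u : ℝ → X → ℝ)
    (hS : ∀ θ x, S θ x = ∑ i : Fin K, h θ x i.castSucc)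
    (hu : ∀ θ x, u θ x = h θ x (Fin.last K))
    (θbar : ℝ) (h' : X → Fin (K + 1) → ℝ)
    -- (i) pointwise derivatives at θ̄
    (hderiv : ∀ x i, HasDerivAt (fun θ => h θ x i) (h' x i) θbar)
    (S' u' : X → ℝ)
    (hS' : ∀ x, S' x = ∑ i : Fin K, h' x i.castSucc)
    (hu' : ∀ x, u' x = h' x (Fin.last K))
    -- (ii) integrability and positive normalizers at θ̄
    (hSint : Integrable (fun x => S θbar x) μ)
    (huint : Integrable (fun x => u θbar x) μ)
    (Z' Z : ℝ)
    (hZ' : Z' = ∫ x, S θbar x ∂μ) (hZ'pos : 0 < Z')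
    (hZ : Z = ∫ x, u θbar x ∂μ) (hZpos : 0 < Z)
    -- (iii) integrability of S'
    (hS'int : Integrable S' μ)
    -- (iv) differentiation under the integral sign for both objectives
    (hd1 : HasDerivAt (fun θ => ∫ x, (S θbar x / Z') * Real.log (S θ x) ∂μ)
      (∫ x, (S θbar x / Z') * (S' x / S θbar x) ∂μ) θbar)
    (hd2 : HasDerivAt (fun θ => ∫ x, (u θbar x / Z) * (-Real.log (u θ x)) ∂μ)
      (∫ x, (u θbar x / Z) * (-u' x / u θbar x) ∂μ) θbar) :
    deriv (fun θ => ∫ x, (S θbar x / Z') * Real.log (S θ x) ∂μ) θbar =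
      (Z / Z') *
        deriv (fun θ => ∫ x, (u θbar x / Z) * (-Real.log (u θ x)) ∂μ) θbar :=
  eow_softmax_frozen_gradient_proportionality_general μ K hK h hpos hsum1 S u hS hu θbar h' hderiv
    S' u' hS' hu' Z' Z hZpos hd1 hd2
end

section
/- Fix φ₀ ∈ ℝ. Assume: (i) for every x ∈ X, the map φ ↦ E φ x has derivative e(x) at φ₀; (ii) 0 < Z(φ) < ∞ for all φ in a neighborhood of φ₀; (iii) x ↦ r x · log(r x) is integrable, and x ↦ r x · E φ x is integrable for all φ in a neighborhood of φ₀; (iv) x ↦ exp(−E φ₀ x) · e(x) and x ↦ r x · e(x) are integrable; (v) differentiation under the integral sign is valid, i.e. Z has derivative −∫ exp(−E φ₀ x) · e(x) dμ at φ₀, and φ ↦ ∫ r x · E φ x dμ has derivative ∫ r x · e(x) dμ at φ₀. Then the map φ ↦ D(φ) := ∫ r x · log(r x / r_φ x) dμ has derivative at φ₀ equal to ∫ r x · e(x) dμ − ∫ r_{φ₀} x · e(x) dμ. -/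
open MeasureTheory

/-- Lemma 1 of the paper, Kim–Bengio gradient formula: for a parametrized
energy `E : ℝ → X → ℝ` with partition function `Z φ = ∫ exp (-E φ x) dμ` (positivity and
finiteness near `φ₀` encoded as `0 < Z φ` together with integrability of
`x ↦ exp (-E φ x)`), Gibbs density `r_φ x = exp (-E φ x) / Z φ`, and a probability
density `r`, under the stated derivative/integrability/differentiation-under-the-integral
hypotheses, the map `φ ↦ KL(r ‖ r_φ) = ∫ r x * log (r x / r_φ x) dμ` has derivative at
`φ₀` equal to `∫ r x * e x dμ - ∫ r_{φ₀} x * e x dμ`. -/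
theorem kl_to_ebm_gradient_formula
    {X : Type*} [MeasurableSpace X] (μ : Measure X) [SigmaFinite μ]
    (E : ℝ → X → ℝ) (r : X → ℝ)
    (hr0 : ∀ x, 0 ≤ r x) (hr1 : ∫ x, r x ∂μ = 1)
    (φ₀ : ℝ) (e : X → ℝ)
    -- (i) pointwise derivative of the energy at φ₀
    (hE : ∀ x, HasDerivAt (fun φ => E φ x) (e x) φ₀)
    -- (ii) 0 < Z φ < ∞ for φ near φ₀
    (hZ : ∀ᶠ φ in nhds φ₀,
      Integrable (fun x => Real.exp (-E φ x)) μ ∧ 0 < ∫ x, Real.exp (-E φ x) ∂μ)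
    -- (iii) integrability of the entropy and expected-energy integrands
    (hint1 : Integrable (fun x => r x * Real.log (r x)) μ)
    (hint2 : ∀ᶠ φ in nhds φ₀, Integrable (fun x => r x * E φ x) μ)
    -- (iv) integrability of the derivative integrands
    (hint3 : Integrable (fun x => Real.exp (-E φ₀ x) * e x) μ)
    (hint4 : Integrable (fun x => r x * e x) μ)
    -- (v) differentiation under the integral sign
    (hdZ : HasDerivAt (fun φ => ∫ x, Real.exp (-E φ x) ∂μ)
      (-∫ x, Real.exp (-E φ₀ x) * e x ∂μ) φ₀)
    (hdE : HasDerivAt (fun φ => ∫ x, r x * E φ x ∂μ) (∫ x, r x * e x ∂μ) φ₀) :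
    HasDerivAt
      (fun φ => ∫ x, r x *
        Real.log (r x / (Real.exp (-E φ x) / ∫ x', Real.exp (-E φ x') ∂μ)) ∂μ)
      ((∫ x, r x * e x ∂μ) -
        ∫ x, (Real.exp (-E φ₀ x) / ∫ x', Real.exp (-E φ₀ x') ∂μ) * e x ∂μ) φ₀ := by

  have hrInt : Integrable r μ := by
    by_contra h
    rw [integral_undef h] at hr1; norm_num at hr1
  set Z : ℝ → ℝ := fun φ => ∫ x, Real.exp (-E φ x) ∂μ with hZdef
  obtain ⟨-, hZ0⟩ := hZ.self_of_nhds
  have hZ0' : Z φ₀ ≠ 0 := ne_of_gt hZ0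
  -- the smooth surrogate
  have hg : HasDerivAt
      (fun φ => (∫ x, r x * Real.log (r x) ∂μ) + (∫ x, r x * E φ x ∂μ) + Real.log (Z φ))
      (0 + (∫ x, r x * e x ∂μ) + (-∫ x, Real.exp (-E φ₀ x) * e x ∂μ) / Z φ₀) φ₀ := by
    exact ((hasDerivAt_const φ₀ _).add hdE).add (hdZ.log hZ0')
  have hval : 0 + (∫ x, r x * e x ∂μ) + (-∫ x, Real.exp (-E φ₀ x) * e x ∂μ) / Z φ₀
      = (∫ x, r x * e x ∂μ) -
        ∫ x, (Real.exp (-E φ₀ x) / ∫ x', Real.exp (-E φ₀ x') ∂μ) * e x ∂μ := by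
    have : (∫ x, (Real.exp (-E φ₀ x) / Z φ₀) * e x ∂μ)
        = (∫ x, Real.exp (-E φ₀ x) * e x ∂μ) / Z φ₀ := by
      simp_rw [div_mul_eq_mul_div]
      exact integral_div _ _
    rw [show (∫ x', Real.exp (-E φ₀ x') ∂μ) = Z φ₀ from rfl, this]
    ring
  rw [← hval]
  refine hg.congr_of_eventuallyEq ?_
  filter_upwards [hZ, hint2] with φ hZφ hintφ
  obtain ⟨hZint, hZpos⟩ := hZφ
  have hptwise : ∀ x, r x * Real.log (r x / (Real.exp (-E φ x) / Z φ))
      = r x * Real.log (r x) + r x * E φ x + r x * Real.log (Z φ) := by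
    intro x
    rcases eq_or_lt_of_le (hr0 x) with h0 | hpos
    · simp [← h0]
    · have hc : Real.exp (-E φ x) / Z φ ≠ 0 :=
        ne_of_gt (div_pos (Real.exp_pos _) hZpos)
      rw [Real.log_div (ne_of_gt hpos) hc, Real.log_div (Real.exp_ne_zero _) (ne_of_gt hZpos),
        Real.log_exp]
      ring
  have hint5 : Integrable (fun x => r x * Real.log (Z φ)) μ := hrInt.mul_const _
  symm
  calc (∫ x, r x * Real.log (r x) ∂μ) + (∫ x, r x * E φ x ∂μ) + Real.log (Z φ)
      = ∫ x, (r x * Real.log (r x) + r x * E φ x) + r x * Real.log (Z φ) ∂μ := by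
        have hadd1 : ∫ x, (r x * Real.log (r x) + r x * E φ x) + r x * Real.log (Z φ) ∂μ
            = (∫ x, r x * Real.log (r x) + r x * E φ x ∂μ)
              + ∫ x, r x * Real.log (Z φ) ∂μ := integral_add (hint1.add hintφ) hint5
        have hadd2 : ∫ x, r x * Real.log (r x) + r x * E φ x ∂μ
            = (∫ x, r x * Real.log (r x) ∂μ) + ∫ x, r x * E φ x ∂μ :=
          integral_add hint1 hintφ
        rw [hadd1, hadd2, integral_mul_const, hr1, one_mul]
    _ = ∫ x, r x * Real.log (r x / (Real.exp (-E φ x) / Z φ)) ∂μ := by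
        exact integral_congr_ae (Filter.Eventually.of_forall fun x => (hptwise x).symm)
end

section
/- Assume the maps x ↦ p x · log(S x), x ↦ p x · log(h x ((y x).castSucc)), and x ↦ q x · log(S x) are integrable with respect to μ. Then ∫ p x · E'(x) dμ − ∫ q x · E'(x) dμ ≤ ∫ p x · (− log(h x ((y x).castSucc))) dμ + ∫ q x · log(S x) dμ, where E'(x) := − log(S x). That is, the energy-based objective E_p[E'] − E_q[E'] is bounded above by the sum of the cross-entropy classification loss E_p[− log h(x)[y]] and the term E_q[log ∑_{i≤K} h(x)[i]]. -/
open MeasureTheory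

/-- Eq. 14 inside Theorem 1 of the paper: for softmax scores
`h : X → Fin (K+1) → ℝ` (positive, summing to one), energy `E' x = -log (S x)` with
`S x = ∑_{i : Fin K} h x i.castSucc`, probability densities `p, q` (w.r.t. `μ`) and a
measurable labeling `y : X → Fin K`, the energy-based objective `E_p[E'] - E_q[E']`
is bounded above by the cross-entropy loss `E_p[-log h(x)[y]]` plus
`E_q[log ∑_{i ≤ K} h(x)[i]]`. -/
theorem eow_softmax_energy_objective_upper_bound
    {X : Type*} [MeasurableSpace X] (μ : Measure X) [SigmaFinite μ]
    (K : ℕ) (hK : 1 ≤ K)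
    (h : X → Fin (K + 1) → ℝ)
    (hpos : ∀ x i, 0 < h x i)
    (hsum1 : ∀ x, ∑ i : Fin (K + 1), h x i = 1)
    (S : X → ℝ) (hS : ∀ x, S x = ∑ i : Fin K, h x i.castSucc)
    (p q : X → ℝ)
    (hp0 : ∀ x, 0 ≤ p x) (hp1 : ∫ x, p x ∂μ = 1)
    (hq0 : ∀ x, 0 ≤ q x) (hq1 : ∫ x, q x ∂μ = 1)
    (y : X → Fin K) (hy : Measurable y)
    (hint1 : Integrable (fun x => p x * Real.log (S x)) μ)
    (hint2 : Integrable (fun x => p x * Real.log (h x ((y x).castSucc))) μ)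
    (hint3 : Integrable (fun x => q x * Real.log (S x)) μ) :
    (∫ x, p x * (-Real.log (S x)) ∂μ) - (∫ x, q x * (-Real.log (S x)) ∂μ) ≤
      (∫ x, p x * (-Real.log (h x ((y x).castSucc))) ∂μ) +
        ∫ x, q x * Real.log (S x) ∂μ := by
  have hSy : ∀ x, h x ((y x).castSucc) ≤ S x := by
    intro x
    rw [hS x]
    exact Finset.single_le_sum (f := fun i => h x i.castSucc)
      (fun i _ => (hpos x i.castSucc).le) (Finset.mem_univ (y x))
  have key : ∫ x, p x * (-Real.log (S x)) ∂μ ≤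
      ∫ x, p x * (-Real.log (h x ((y x).castSucc))) ∂μ := by
    simp only [mul_neg]
    apply integral_mono hint1.neg' hint2.neg'
    intro x
    simp only
    exact neg_le_neg (mul_le_mul_of_nonneg_left
        (Real.log_le_log (hpos x ((y x).castSucc)) (hSy x)) (hp0 x))
  have hq : ∫ x, q x * (-Real.log (S x)) ∂μ = -∫ x, q x * Real.log (S x) ∂μ := by
    rw [← integral_neg]; congr 1; ext x; ring
  rw [hq]
  linarith
end

section
/- Fix θ̄ ∈ ℝ. Assume: (i) for every x ∈ X and every i : Fin (K+1), θ ↦ h θ x i has derivative h'(x,i) at θ̄; write S'(x) := ∑_{i : Fin K} h'(x, i.castSucc) and e'(x) := − S'(x) / S θ̄ x (the derivative at θ̄ of θ ↦ E'_θ(x) := − log(S θ x)); (ii) 0 < Z'(θ) < ∞ for all θ in a neighborhood of θ̄, where Z'(θ) := ∫ S θ x dμ; (iii) x ↦ p x · log(p x) is integrable, x ↦ p x · log(S θ x) is integrable for θ near θ̄, and x ↦ S'(x), x ↦ p x · e'(x), x ↦ (S θ̄ x / Z'(θ̄)) · e'(x) are integrable; (iv) differentiation under the integral sign is valid: θ ↦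 Z'(θ) has derivative ∫ S'(x) dμ at θ̄, θ ↦ ∫ p x · (− log(S θ x)) dμ has derivative ∫ p x · e'(x) dμ at θ̄, and θ ↦ ∫ (S θ̄ x / Z'(θ̄)) · (− log(S θ x)) dμ has derivative ∫ (S θ̄ x / Z'(θ̄)) · e'(x) dμ at θ̄. Then: (a) the map θ ↦ KL(p‖q_θ) := ∫ p x · log(p x / q_θ x) dμ has derivative at θ̄ equal to ∫ p x · e'(x) dμ − ∫ q_{θ̄} x · e'(x) dμ; and (b) this same number is the derivative at θ̄ of the frozen-second-term objective θ ↦ ∫ p x · E'_θ(x) dμ − ∫ q_{θ̄} x · E'_θ(x) dμ. -/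
open MeasureTheory Filter

/-!
Since `log q_θ = log S_θ - log Z'(θ)` and `∫ p = 1`, the divergence splits as
`KL(p ‖ q_θ) = ∫ p log p + ∫ p E'_θ + log Z'(θ)`. The first term is constant, the second is
the first term of the frozen objective, and the derivative of `log Z'` at `θ̄` is
`(∫ S') / Z'(θ̄) = -∫ q_θ̄ e'`, which is exactly the derivative of the frozen second term.
-/

section KLDecomposition

variable {X : Type*} [MeasurableSpace X] {μ : Measure X}

theorem mul_log_div_div_eq {a s Z : ℝ} (hs : s ≠ 0) (hZ : Z ≠ 0) :
    a * Real.log (a / (s / Z)) = a * Real.log a + a * -Real.log s + a * Real.log Z := by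
  rcases eq_or_ne a 0 with rfl | ha
  · simp
  · rw [Real.log_div ha (div_ne_zero hs hZ), Real.log_div hs hZ]
    ring

theorem integral_mul_log_div_div {p s : X → ℝ} {Z : ℝ} (hp : ∫ x, p x ∂μ = 1)
    (hs : ∀ x, s x ≠ 0) (hZ : Z ≠ 0)
    (hplogp : Integrable (fun x => p x * Real.log (p x)) μ)
    (hplogs : Integrable (fun x => p x * Real.log (s x)) μ) :
    ∫ x, p x * Real.log (p x / (s x / Z)) ∂μ =
      (∫ x, p x * Real.log (p x) ∂μ) + (∫ x, p x * -Real.log (s x) ∂μ) + Real.log Z := by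
  have hp_int : Integrable p μ := .of_integral_ne_zero (by simp [hp])
  have hplogs' : Integrable (fun x => p x * -Real.log (s x)) μ := by
    simp_rw [mul_neg]
    exact hplogs.neg
  simp_rw [mul_log_div_div_eq (hs _) hZ]
  have hsum : Integrable (fun x => p x * Real.log (p x) + p x * -Real.log (s x)) μ :=
    hplogp.add hplogs'
  rw [integral_add hsum (hp_int.mul_const _), integral_add hplogp hplogs',
    integral_mul_const, hp, one_mul]

theorem integral_div_mul_neg_div_self {s s' : X → ℝ} (Z : ℝ) (hs : ∀ x, s x ≠ 0) :
    ∫ x, s x / Z * (-s' x / s x) ∂μ = -(∫ x, s' x ∂μ) / Z := by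
  have hpt : ∀ x, s x / Z * (-s' x / s x) = -s' x / Z := fun x => by
    field_simp [hs x]
  simp_rw [hpt]
  rw [integral_div, integral_neg]

end KLDecomposition

theorem eow_softmax_kl_gradient_equals_frozen_objective_gradient_general
    {X : Type*} [MeasurableSpace X] (μ : Measure X)
    (K : ℕ) (hK : 1 ≤ K)
    (h : ℝ → X → Fin (K + 1) → ℝ)
    (hpos : ∀ θ x i, 0 < h θ x i)
    (S : ℝ → X → ℝ) (hS : ∀ θ x, S θ x = ∑ i : Fin K, h θ x i.castSucc)
    (Z' : ℝ → ℝ)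
    (p : X → ℝ) (hp1 : ∫ x, p x ∂μ = 1)
    (θbar : ℝ)
    (S' : X → ℝ)
    (e' : X → ℝ) (he' : ∀ x, e' x = -S' x / S θbar x)
    -- (ii) 0 < Z' θ < ∞ for θ near θ̄
    (hZ' : ∀ᶠ θ in nhds θbar, Integrable (fun x => S θ x) μ ∧ 0 < Z' θ)
    -- (iii) integrability hypotheses
    (hint1 : Integrable (fun x => p x * Real.log (p x)) μ)
    (hint2 : ∀ᶠ θ in nhds θbar, Integrable (fun x => p x * Real.log (S θ x)) μ)
    -- (iv) differentiation under the integral sign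
    (hd1 : HasDerivAt Z' (∫ x, S' x ∂μ) θbar)
    (hd2 : HasDerivAt (fun θ => ∫ x, p x * (-Real.log (S θ x)) ∂μ)
      (∫ x, p x * e' x ∂μ) θbar)
    (hd3 : HasDerivAt (fun θ => ∫ x, (S θbar x / Z' θbar) * (-Real.log (S θ x)) ∂μ)
      (∫ x, (S θbar x / Z' θbar) * e' x ∂μ) θbar) :
    HasDerivAt (fun θ => ∫ x, p x * Real.log (p x / (S θ x / Z' θ)) ∂μ)
      ((∫ x, p x * e' x ∂μ) - ∫ x, (S θbar x / Z' θbar) * e' x ∂μ) θbar ∧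
    HasDerivAt
      (fun θ => (∫ x, p x * (-Real.log (S θ x)) ∂μ) -
        ∫ x, (S θbar x / Z' θbar) * (-Real.log (S θ x)) ∂μ)
      ((∫ x, p x * e' x ∂μ) - ∫ x, (S θbar x / Z' θbar) * e' x ∂μ) θbar := by
  have hS_ne : ∀ θ x, S θ x ≠ 0 := fun θ x => by
    rw [hS]
    exact (Finset.sum_pos (fun i _ => hpos θ x i.castSucc) ⟨⟨0, hK⟩, Finset.mem_univ _⟩).ne'
  have hfrozen : ∫ x, (S θbar x / Z' θbar) * e' x ∂μ = -(∫ x, S' x ∂μ) / Z' θbar := by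
    simp_rw [he']
    exact integral_div_mul_neg_div_self _ (hS_ne θbar)
  have hKL : (fun θ => ∫ x, p x * Real.log (p x / (S θ x / Z' θ)) ∂μ) =ᶠ[nhds θbar]
      fun θ => (∫ x, p x * Real.log (p x) ∂μ) + (∫ x, p x * -Real.log (S θ x) ∂μ) +
        Real.log (Z' θ) := by
    filter_upwards [hZ', hint2] with θ hZθ hplogS
    exact integral_mul_log_div_div hp1 (hS_ne θ) hZθ.2.ne' hint1 hplogS
  have hlogZ := hd1.log hZ'.self_of_nhds.2.ne'
  refine ⟨?_, hd2.sub hd3⟩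
  rw [hfrozen, neg_div, sub_neg_eq_add]
  simpa only [zero_add] using
    (((hasDerivAt_const θbar _).add hd2).add hlogZ).congr_of_eventuallyEq hKL

/-- gradient identity underlying Theorem 1 of the paper: for a
parametrized softmax family `h : ℝ → X → Fin (K+1) → ℝ` with
`S θ x = ∑_{i : Fin K} h θ x i.castSucc`, energy `E'_θ x = -log (S θ x)`,
partition function `Z' θ = ∫ S θ x dμ` (positive and finite near `θ̄`, finiteness
encoded as integrability of `S θ`), EBM density `q_θ x = S θ x / Z' θ`, and a
probability density `p`, with pointwise derivatives `h'` at `θ̄`,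
`S' x = ∑_{i : Fin K} h' x i.castSucc`, `e' x = -S' x / S θ̄ x`, and the stated
integrability and differentiation-under-the-integral hypotheses:
(a) `θ ↦ KL(p ‖ q_θ) = ∫ p x * log (p x / q_θ x) dμ` has derivative at `θ̄` equal to
`∫ p x * e' x dμ - ∫ q_{θ̄} x * e' x dμ`, and
(b) the same number is the derivative at `θ̄` of the frozen-second-term objective
`θ ↦ ∫ p x * E'_θ x dμ - ∫ q_{θ̄} x * E'_θ x dμ`. -/
theorem eow_softmax_kl_gradient_equals_frozen_objective_gradient
    {X : Type*} [MeasurableSpace X] (μ : Measure X) [SigmaFinite μ]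
    (K : ℕ) (hK : 1 ≤ K)
    (h : ℝ → X → Fin (K + 1) → ℝ)
    (hpos : ∀ θ x i, 0 < h θ x i)
    (hsum1 : ∀ θ x, ∑ i : Fin (K + 1), h θ x i = 1)
    (S : ℝ → X → ℝ) (hS : ∀ θ x, S θ x = ∑ i : Fin K, h θ x i.castSucc)
    (Z' : ℝ → ℝ) (hZ'def : ∀ θ, Z' θ = ∫ x, S θ x ∂μ)
    (p : X → ℝ) (hp0 : ∀ x, 0 ≤ p x) (hp1 : ∫ x, p x ∂μ = 1)
    (θbar : ℝ) (h' : X → Fin (K + 1) → ℝ)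
    -- (i) pointwise derivatives at θ̄
    (hderiv : ∀ x i, HasDerivAt (fun θ => h θ x i) (h' x i) θbar)
    (S' : X → ℝ) (hS' : ∀ x, S' x = ∑ i : Fin K, h' x i.castSucc)
    (e' : X → ℝ) (he' : ∀ x, e' x = -S' x / S θbar x)
    -- (ii) 0 < Z' θ < ∞ for θ near θ̄
    (hZ' : ∀ᶠ θ in nhds θbar, Integrable (fun x => S θ x) μ ∧ 0 < Z' θ)
    -- (iii) integrability hypotheses
    (hint1 : Integrable (fun x => p x * Real.log (p x)) μ)
    (hint2 : ∀ᶠ θ in nhds θbar, Integrable (fun x => p x * Real.log (S θ x)) μ)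
    (hint3 : Integrable S' μ)
    (hint4 : Integrable (fun x => p x * e' x) μ)
    (hint5 : Integrable (fun x => (S θbar x / Z' θbar) * e' x) μ)
    -- (iv) differentiation under the integral sign
    (hd1 : HasDerivAt Z' (∫ x, S' x ∂μ) θbar)
    (hd2 : HasDerivAt (fun θ => ∫ x, p x * (-Real.log (S θ x)) ∂μ)
      (∫ x, p x * e' x ∂μ) θbar)
    (hd3 : HasDerivAt (fun θ => ∫ x, (S θbar x / Z' θbar) * (-Real.log (S θ x)) ∂μ)
      (∫ x, (S θbar x / Z' θbar) * e' x ∂μ) θbar) :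
    HasDerivAt (fun θ => ∫ x, p x * Real.log (p x / (S θ x / Z' θ)) ∂μ)
      ((∫ x, p x * e' x ∂μ) - ∫ x, (S θbar x / Z' θbar) * e' x ∂μ) θbar ∧
    HasDerivAt
      (fun θ => (∫ x, p x * (-Real.log (S θ x)) ∂μ) -
        ∫ x, (S θbar x / Z' θbar) * (-Real.log (S θ x)) ∂μ)
      ((∫ x, p x * e' x ∂μ) - ∫ x, (S θbar x / Z' θbar) * e' x ∂μ) θbar :=
  eow_softmax_kl_gradient_equals_frozen_objective_gradient_general μ K hK h hpos S hS Z' p hp1 θbar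
    S' e' he' hZ' hint1 hint2 hd1 hd2 hd3
end
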